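/- Let {M_{(t₁,…,tₙ)}} be a consistent family of normalized finitely additive L(H)-valued measures over a family (Λ_t, F_t)_{t∈T} of nonempty sets with algebras of subsets. Then there exists a unique normalized finitely additive L(H)-valued measure 𝕄 on the algebra A_Λ of cylinder sets of Λ = Π_{t∈T} Λ_t such that 𝕄(π_{(t₁,…,tₙ)}⁻¹(F)) = M_{(t₁,…,tₙ)}(F) for every finite tuple of distinct indices t₁,…,tₙ ∈ T and every F in the product algebra on Λ_{t₁} × ⋯ × Λ_{tₙ}. -/

import Mathlib

open scoped BigOperators

/-- An algebra of subsets of a set `α`. -/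
structure SetAlgebra (α : Type*) where
  sets : Set (Set α)
  univ_mem : Set.univ ∈ sets
  compl_mem : ∀ ⦃s : Set α⦄, s ∈ sets → sᶜ ∈ sets
  union_mem : ∀ ⦃s t : Set α⦄, s ∈ sets → t ∈ sets → s ∪ t ∈ sets

/-- The algebra of subsets of `α` generated by a collection `G` of subsets:
the smallest collection containing `G` and `univ` and closed under complements
and finite unions. -/
inductive GenAlg {α : Type*} (G : Set (Set α)) : Set α → Prop
  | basic {s : Set α} : s ∈ G → GenAlg G s
  | univ : GenAlg G Set.univ
  | compl {s : Set α} : GenAlg G s → GenAlg G sᶜ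
  | union {s t : Set α} : GenAlg G s → GenAlg G t → GenAlg G (s ∪ t)

/-- The product algebra on `Π i, Λ i`: the algebra of subsets generated by the
rectangles `B₁ × ⋯ × Bₙ` with measurable sides `Bᵢ ∈ Fᵢ`. -/
def prodAlgebra {ι : Type*} {Λ : ι → Type*} (F : ∀ i, SetAlgebra (Λ i)) :
    Set (Set (∀ i, Λ i)) :=
  {S | GenAlg {R | ∃ B : ∀ i, Set (Λ i), (∀ i, B i ∈ (F i).sets) ∧ R = Set.univ.pi B} S}

/-- The collection `A_Λ` of all cylinder sets of `Λ = Π_{t∈T} Λ_t`: sets of the form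
`π_{(t₁,…,tₙ)}⁻¹(F)` for distinct indices `t₁,…,tₙ ∈ T` and `F` in the product algebra
on `Λ_{t₁} × ⋯ × Λ_{tₙ}`. -/
def cylinderSets {T : Type*} (Λ : T → Type*) (F : ∀ t, SetAlgebra (Λ t)) :
    Set (Set (∀ t, Λ t)) :=
  {A | ∃ (n : ℕ) (t : Fin n → T), Function.Injective t ∧
        ∃ Fs ∈ prodAlgebra (fun j => F (t j)),
          A = (fun (x : ∀ s, Λ s) (j : Fin n) => x (t j)) ⁻¹' Fs}

/-- A consistent family of normalized finitely additive `L(H)`-valued measures: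
to each finite tuple `(t₁,…,tₙ)` of distinct indices in `T` it assigns a normalized
finitely additive measure `M (t₁,…,tₙ)` on the product algebra on `Λ_{t₁} × ⋯ × Λ_{tₙ}`,
and these measures satisfy the consistency conditions (a) (permutation invariance on
rectangles) and (b) (marginal compatibility for subtuples). -/
structure ConsistentFamily {T : Type*} (Λ : T → Type*) (F : ∀ t, SetAlgebra (Λ t))
    (H : Type*) [NormedAddCommGroup H] [InnerProductSpace ℂ H] [CompleteSpace H] where
  M : ∀ {n : ℕ} (t : Fin n → T), Set (∀ j : Fin n, Λ (t j)) → (H →L[ℂ] H)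
  normalized : ∀ {n : ℕ} (t : Fin n → T), Function.Injective t → M t Set.univ = 1
  additive : ∀ {n : ℕ} (t : Fin n → T), Function.Injective t →
    ∀ ⦃A B : Set (∀ j : Fin n, Λ (t j))⦄, A ∈ prodAlgebra (fun j => F (t j)) →
      B ∈ prodAlgebra (fun j => F (t j)) → Disjoint A B → M t (A ∪ B) = M t A + M t B
  perm : ∀ {n : ℕ} (t : Fin n → T), Function.Injective t → ∀ (σ : Equiv.Perm (Fin n))
    (B : ∀ j : Fin n, Set (Λ (t j))), (∀ j, B j ∈ (F (t j)).sets) →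
    M t (Set.univ.pi B) = M (fun j => t (σ j)) (Set.univ.pi fun j => B (σ j))
  marginal : ∀ {n k : ℕ} (t : Fin n → T), Function.Injective t →
    ∀ (ι : Fin k → Fin n), StrictMono ι →
    ∀ (Fs : Set (∀ j : Fin k, Λ (t (ι j)))), Fs ∈ prodAlgebra (fun j => F (t (ι j))) →
    M t {x : ∀ j : Fin n, Λ (t j) | (fun j => x (ι j)) ∈ Fs} = M (fun j => t (ι j)) Fs

/-!
A cylinder set has many representations `π_t⁻¹ S`, but any two of them can be pulled back to a
common injective tuple `u`. So `𝕄 (π_t⁻¹ S) := M_t S` is well defined as soon as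
`M_u (π_e⁻¹ S) = M_{u ∘ e} S` for every injective reindexing `e`. Sorting `e` writes it as a
permutation followed by a strictly monotone map: the monotone part is the marginal condition (b),
and the permutation part is condition (a), which is assumed only on rectangles but propagates to
the whole product algebra because each of its sets is a finite disjoint union of rectangles.
Additivity of `𝕄` is then additivity of `M_u`, and uniqueness is forced by the prescribed values.
-/

open MeasureTheory Set Function

section FinitelyAdditive

variable {α G : Type*}

def FinitelyAdditiveOn [Add G] (C : Set (Set α)) (μ : Set α → G) : Prop :=
  ∀ ⦃s t : Set α⦄, s ∈ C → t ∈ C → Disjoint s t → μ (s ∪ t) = μ s + μ t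

theorem FinitelyAdditiveOn.map_empty [AddCancelMonoid G] {C : Set (Set α)} {μ : Set α → G}
    (hμ : FinitelyAdditiveOn C μ) (hC : ∅ ∈ C) : μ ∅ = 0 := by
  simpa using hμ hC hC (disjoint_empty ∅)

theorem FinitelyAdditiveOn.comp_preimage [Add G] {β : Type*} {C : Set (Set β)}
    {C' : Set (Set α)} {μ : Set β → G} (hμ : FinitelyAdditiveOn C μ) {f : β → α}
    (hf : ∀ s ∈ C', f ⁻¹' s ∈ C) : FinitelyAdditiveOn C' fun s => μ (f ⁻¹' s) :=
  fun _ _ hs ht hst => hμ (hf _ hs) (hf _ ht) (hst.preimage f)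

end FinitelyAdditive

namespace SetAlgebra

variable {α : Type*} (A : SetAlgebra α) {s t : Set α}

theorem inter_mem (hs : s ∈ A.sets) (ht : t ∈ A.sets) : s ∩ t ∈ A.sets := by
  simpa using A.compl_mem (A.union_mem (A.compl_mem hs) (A.compl_mem ht))

theorem sdiff_mem (hs : s ∈ A.sets) (ht : t ∈ A.sets) : s \ t ∈ A.sets :=
  A.inter_mem hs (A.compl_mem ht)

end SetAlgebra

namespace GenAlg

variable {α : Type*} {G : Set (Set α)} {s t : Set α}

theorem empty : GenAlg G ∅ := by
  simpa using (univ : GenAlg G _).compl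

theorem inter (hs : GenAlg G s) (ht : GenAlg G t) : GenAlg G (s ∩ t) := by
  simpa using (hs.compl.union ht.compl).compl

theorem isSetRing : IsSetRing {s | GenAlg G s} where
  empty_mem := empty
  union_mem _ _ := union
  sdiff_mem _ _ hs ht := hs.inter ht.compl

theorem iInter {κ : Type*} [Finite κ] {s : κ → Set α} (hs : ∀ k, GenAlg G (s k)) :
    GenAlg G (⋂ k, s k) := by
  classical
  cases nonempty_fintype κ
  have key : ∀ K : Finset κ, GenAlg G (⋂ k ∈ K, s k) := fun K => by
    induction K using Finset.induction_on with
    | empty => simpa using univ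
    | insert k K _ ih => simpa using (hs k).inter ih
  simpa using key Finset.univ

theorem preimage {β : Type*} {G' : Set (Set β)} {f : β → α}
    (hf : ∀ s ∈ G, GenAlg G' (f ⁻¹' s)) (hs : GenAlg G s) : GenAlg G' (f ⁻¹' s) := by
  induction hs with
  | basic h => exact hf _ h
  | univ => exact univ
  | compl _ ih => exact ih.compl
  | union _ _ ihs iht => exact ihs.union iht

theorem mem_of_isSetRing {R : Set (Set α)} (hR : IsSetRing R) (hG : G ⊆ R) (huniv : Set.univ ∈ R)
    (hs : GenAlg G s) : s ∈ R := by
  induction hs with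
  | basic h => exact hG h
  | univ => exact huniv
  | compl _ ih => simpa [compl_eq_univ_sdiff] using hR.sdiff_mem huniv ih
  | union _ _ ihs iht => exact hR.union_mem ihs iht

end GenAlg

section Rectangles

variable {ι : Type*} {Λ : ι → Type*} (F : ∀ i, SetAlgebra (Λ i))

def rectangles : Set (Set (∀ i, Λ i)) :=
  {R | ∃ B : ∀ i, Set (Λ i), (∀ i, B i ∈ (F i).sets) ∧ R = univ.pi B}

variable {F}

theorem rectangles_subset_prodAlgebra : rectangles F ⊆ prodAlgebra F :=
  fun _ => GenAlg.basic

theorem isSetRing_prodAlgebra : IsSetRing (prodAlgebra F) := GenAlg.isSetRing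

theorem exists_finset_rectangles_sdiff [Finite ι] {B B' : ∀ i, Set (Λ i)}
    (hB : ∀ i, B i ∈ (F i).sets) (hB' : ∀ i, B' i ∈ (F i).sets) :
    ∃ I : Finset (Set (∀ i, Λ i)), ↑I ⊆ rectangles F ∧
      PairwiseDisjoint (I : Set (Set (∀ i, Λ i))) id ∧
      univ.pi B \ univ.pi B' = ⋃₀ (I : Set (Set (∀ i, Λ i))) := by
  classical
  cases nonempty_fintype ι
  -- a point `x` of the difference lies in the piece `f i = decide (x i ∈ B' i)`
  let piece : (ι → Bool) → Set (∀ i, Λ i) := fun f =>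
    univ.pi fun i => if f i then B i ∩ B' i else B i \ B' i
  refine ⟨(Finset.univ.filter (· ≠ fun _ => true)).image piece, ?_, ?_, ?_⟩
  · intro R hR
    obtain ⟨f, -, rfl⟩ := by simpa using hR
    refine ⟨_, fun i => ?_, rfl⟩
    split_ifs
    exacts [(F i).inter_mem (hB i) (hB' i), (F i).sdiff_mem (hB i) (hB' i)]
  · rintro _ hR _ hR' hne
    obtain ⟨f, -, rfl⟩ := by simpa using hR
    obtain ⟨g, -, rfl⟩ := by simpa using hR'
    obtain ⟨i, hi⟩ := Function.ne_iff.mp fun h : f = g => hne (h ▸ rfl)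
    refine Set.disjoint_univ_pi.mpr ⟨i, ?_⟩
    cases hf : f i <;> cases hg : g i <;> simp only [hf, hg, ne_eq, not_true_eq_false] at hi ⊢
    exacts [disjoint_sdiff_inter, disjoint_sdiff_inter.symm]
  · ext x
    simp only [mem_sdiff, mem_univ_pi, Finset.coe_image, Finset.coe_filter, mem_sUnion, mem_image,
      Finset.mem_univ, true_and, mem_ofPred_eq, exists_exists_and_eq_and, piece]
    constructor
    · rintro ⟨hx, hx'⟩
      refine ⟨fun i => decide (x i ∈ B' i), fun h => hx' fun i => ?_, fun i => ?_⟩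
      · simpa using congrFun h i
      · by_cases h : x i ∈ B' i <;> simp [h, hx i]
    · rintro ⟨f, hf, hx⟩
      refine ⟨fun i => ?_, fun h => hf (funext fun i => ?_)⟩
      · have := hx i; split_ifs at this <;> exact this.1
      · have := hx i; split_ifs at this with hfi
        · exact hfi
        · exact absurd (h i) this.2

theorem isSetSemiring_rectangles [Finite ι] : IsSetSemiring (insert ∅ (rectangles F)) where
  empty_mem := mem_insert _ _
  inter_mem := by
    rintro s (rfl | ⟨B, hB, rfl⟩) t (rfl | ⟨B', hB', rfl⟩)
    · simp
    · simp
    · simp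
    · exact Or.inr ⟨_, fun i => (F i).inter_mem (hB i) (hB' i), pi_inter_distrib.symm⟩
  sdiff_eq_sUnion' := by
    rintro s (rfl | ⟨B, hB, rfl⟩) t (rfl | ⟨B', hB', rfl⟩)
    · exact ⟨∅, by simp⟩
    · exact ⟨∅, by simp⟩
    · exact ⟨{univ.pi B}, by simp [show univ.pi B ∈ rectangles F from ⟨B, hB, rfl⟩]⟩
    · obtain ⟨I, hI, hdisj, heq⟩ := exists_finset_rectangles_sdiff hB hB'
      exact ⟨I, hI.trans (subset_insert _ _), hdisj, heq⟩

theorem exists_finpartition_rectangles [Finite ι] {S : Set (∀ i, Λ i)}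
    (hS : S ∈ prodAlgebra F) : ∃ P : Finpartition S, ↑P.parts ⊆ rectangles F := by
  have hsup : S ∈ supClosure (insert ∅ (rectangles F)) := by
    refine GenAlg.mem_of_isSetRing isSetSemiring_rectangles.isSetRing_supClosure
      ((subset_insert _ _).trans subset_supClosure) (subset_supClosure ?_) hS
    exact mem_insert_of_mem _ ⟨fun _ => univ, fun i => (F i).univ_mem, pi_univ _ |>.symm⟩
  obtain ⟨P, hP⟩ := isSetSemiring_rectangles.mem_supClosure_iff.mp hsup
  exact ⟨P, fun R hR => (hP hR).resolve_left (by rintro rfl; exact P.bot_notMem hR)⟩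

theorem FinitelyAdditiveOn.eqOn_prodAlgebra [Finite ι] {G : Type*} [AddCancelCommMonoid G]
    {μ ν : Set (∀ i, Λ i) → G} (hμ : FinitelyAdditiveOn (prodAlgebra F) μ)
    (hν : FinitelyAdditiveOn (prodAlgebra F) ν) (h : ∀ R ∈ rectangles F, μ R = ν R) :
    EqOn μ ν (prodAlgebra F) := by
  intro S hS
  obtain ⟨P, hP⟩ := exists_finpartition_rectangles hS
  let μ' := isSetRing_prodAlgebra.addContent_of_union μ (hμ.map_empty GenAlg.empty)
    fun hs ht => hμ hs ht
  let ν' := isSetRing_prodAlgebra.addContent_of_union ν (hν.map_empty GenAlg.empty)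
    fun hs ht => hν hs ht
  have hparts : ↑P.parts ⊆ prodAlgebra F := hP.trans rectangles_subset_prodAlgebra
  have hS' : S = ⋃₀ ↑P.parts := by rw [← Finset.sup_id_set_eq_sUnion, P.sup_parts]
  calc μ S = μ' (⋃₀ ↑P.parts) := by rw [← hS']; rfl
    _ = ∑ R ∈ P.parts, μ' R := addContent_sUnion hparts P.disjoint (hS' ▸ hS)
    _ = ∑ R ∈ P.parts, ν' R := Finset.sum_congr rfl fun R hR => h R (hP hR)
    _ = ν' (⋃₀ ↑P.parts) := (addContent_sUnion hparts P.disjoint (hS' ▸ hS)).symm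
    _ = ν S := by rw [← hS']; rfl

end Rectangles

section Reindex

variable {ι κ : Type*} {Λ : ι → Type*} {F : ∀ i, SetAlgebra (Λ i)}

theorem eval_preimage_mem_prodAlgebra {i : ι} {s : Set (Λ i)} (hs : s ∈ (F i).sets) :
    eval i ⁻¹' s ∈ prodAlgebra F := by
  classical
  rw [eval_preimage]
  refine GenAlg.basic ⟨_, ?_, rfl⟩
  exact (forall_update_iff _ fun j t => t ∈ (F j).sets).mpr ⟨hs, fun j _ => (F j).univ_mem⟩

theorem preimage_reindex_mem_prodAlgebra [Finite κ] (e : κ → ι) {S : Set (∀ k, Λ (e k))}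
    (hS : S ∈ prodAlgebra fun k => F (e k)) : (fun x k => x (e k)) ⁻¹' S ∈ prodAlgebra F := by
  refine GenAlg.preimage ?_ hS
  rintro _ ⟨B, hB, rfl⟩
  have : (fun (x : ∀ i, Λ i) k => x (e k)) ⁻¹' univ.pi B = ⋂ k, eval (e k) ⁻¹' B k := by
    ext; simp
  rw [this]
  exact GenAlg.iInter fun k => eval_preimage_mem_prodAlgebra (hB k)

theorem surjective_reindex [∀ i, Nonempty (Λ i)] {e : κ → ι} (he : Injective e) :
    Surjective fun (x : ∀ i, Λ i) k => x (e k) := by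
  intro y
  obtain ⟨x, hx⟩ := Subtype.surjective_restrict (β := Λ) (· ∈ range e)
    ((Equiv.ofInjective e he).piCongrLeft (fun a : range e => Λ a) y)
  refine ⟨x, funext fun k => ?_⟩
  exact (congr_fun hx (Equiv.ofInjective e he k)).trans
    (Equiv.piCongrLeft_apply_apply (fun a : range e => Λ a) (Equiv.ofInjective e he) y k)

end Reindex

theorem exists_strictMono_comp_perm {n m : ℕ} {e : Fin n → Fin m} (he : Injective e) :
    ∃ (ι : Fin n → Fin m) (σ : Equiv.Perm (Fin n)), StrictMono ι ∧ e = fun i => ι (σ i) :=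
  ⟨e ∘ Tuple.sort e, (Tuple.sort e).symm,
    (Tuple.monotone_sort e).strictMono_of_injective (he.comp (Tuple.sort e).injective),
    by ext i; simp⟩

theorem exists_injective_tuple_factor {T : Type*} {n m : ℕ} (t : Fin n → T) (s : Fin m → T) :
    ∃ (N : ℕ) (u : Fin N → T), Injective u ∧ (∃ e : Fin n → Fin N, t = fun i => u (e i)) ∧
      ∃ f : Fin m → Fin N, s = fun i => u (f i) := by
  classical
  let S := Finset.univ.image t ∪ Finset.univ.image s
  refine ⟨S.card, fun j => S.equivFin.symm j,
    Subtype.val_injective.comp S.equivFin.symm.injective,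
    ⟨fun i => S.equivFin ⟨t i, by simp [S]⟩, by simp⟩,
    ⟨fun i => S.equivFin ⟨s i, by simp [S]⟩, by simp⟩⟩

namespace ConsistentFamily

variable {T : Type*} {Λ : T → Type*} {F : ∀ t, SetAlgebra (Λ t)} {H : Type*}
  [NormedAddCommGroup H] [InnerProductSpace ℂ H] [CompleteSpace H] (CF : ConsistentFamily Λ F H)

theorem finitelyAdditiveOn {n : ℕ} {t : Fin n → T} (ht : Injective t) :
    FinitelyAdditiveOn (prodAlgebra fun j => F (t j)) (CF.M t) :=
  CF.additive t ht

theorem M_preimage_perm {n : ℕ} {u : Fin n → T} (hu : Injective u) (σ : Equiv.Perm (Fin n))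
    {S : Set (∀ i, Λ (u (σ i)))} (hS : S ∈ prodAlgebra fun i => F (u (σ i))) :
    CF.M u ((fun x i => x (σ i)) ⁻¹' S) = CF.M (fun i => u (σ i)) S := by
  refine FinitelyAdditiveOn.eqOn_prodAlgebra
    ((CF.finitelyAdditiveOn hu).comp_preimage fun _ => preimage_reindex_mem_prodAlgebra σ)
    (CF.finitelyAdditiveOn (hu.comp σ.injective)) ?_ hS
  rintro _ ⟨B, hB, rfl⟩
  set C := σ.piCongrLeft (fun j => Set (Λ (u j))) B
  have hC : ∀ i, C (σ i) = B i := σ.piCongrLeft_apply_apply (fun j => Set (Λ (u j))) B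
  have hC_mem : ∀ j, C j ∈ (F (u j)).sets := σ.forall_congr_right.mp fun i => hC i ▸ hB i
  have hpre : (fun (x : ∀ j, Λ (u j)) i => x (σ i)) ⁻¹' univ.pi B = univ.pi C := by
    ext x
    simp only [mem_preimage, mem_univ_pi, ← hC]
    exact σ.forall_congr_right (q := fun j => x j ∈ C j)
  rw [hpre, CF.perm u hu σ C hC_mem]
  simp only [hC]

theorem M_preimage_reindex {n m : ℕ} {u : Fin m → T} (hu : Injective u) {e : Fin n → Fin m}
    (he : Injective e) {S : Set (∀ i, Λ (u (e i)))} (hS : S ∈ prodAlgebra fun i => F (u (e i))) :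
    CF.M u ((fun x i => x (e i)) ⁻¹' S) = CF.M (fun i => u (e i)) S := by
  obtain ⟨ι, σ, hι, rfl⟩ := exists_strictMono_comp_perm he
  calc CF.M u ((fun x i => x (ι (σ i))) ⁻¹' S)
      = CF.M u {x | (fun k => x (ι k)) ∈ (fun y i => y (σ i)) ⁻¹' S} := rfl
    _ = CF.M (fun k => u (ι k)) ((fun y i => y (σ i)) ⁻¹' S) :=
      CF.marginal u hu ι hι _ (preimage_reindex_mem_prodAlgebra σ hS)
    _ = CF.M (fun i => u (ι (σ i))) S := CF.M_preimage_perm (hu.comp hι.injective) σ hS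

theorem M_eq_of_preimage_eq [∀ t, Nonempty (Λ t)] {n m : ℕ} {t : Fin n → T} {s : Fin m → T}
    (ht : Injective t) (hs : Injective s) {S : Set (∀ j, Λ (t j))} {S' : Set (∀ j, Λ (s j))}
    (hS : S ∈ prodAlgebra fun j => F (t j)) (hS' : S' ∈ prodAlgebra fun j => F (s j))
    (h : (fun (x : ∀ a, Λ a) j => x (t j)) ⁻¹' S = (fun (x : ∀ a, Λ a) j => x (s j)) ⁻¹' S') :
    CF.M t S = CF.M s S' := by
  obtain ⟨N, u, hu, ⟨e, rfl⟩, ⟨f, rfl⟩⟩ := exists_injective_tuple_factor t s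
  have hpre : (fun (x : ∀ j, Λ (u j)) i => x (e i)) ⁻¹' S = (fun x i => x (f i)) ⁻¹' S' :=
    (surjective_reindex hu).preimage_injective h
  rw [← CF.M_preimage_reindex hu ht.of_comp hS, hpre, CF.M_preimage_reindex hu hs.of_comp hS']

theorem exists_extension [∀ t, Nonempty (Λ t)] :
    ∃ 𝕄 : Set (∀ t, Λ t) → (H →L[ℂ] H), ∀ (n : ℕ) (t : Fin n → T), Injective t →
      ∀ S ∈ prodAlgebra (fun j => F (t j)), 𝕄 ((fun x j => x (t j)) ⁻¹' S) = CF.M t S := by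
  -- `r = ⟨n, ⟨t, _⟩, ⟨S, _⟩⟩` represents the cylinder set `π_t⁻¹ S`
  let cylinder : (Σ n, Σ t : {t : Fin n → T // Injective t}, prodAlgebra fun j => F (t.1 j)) →
      Set (∀ t, Λ t) := fun r => (fun x j => x (r.2.1.1 j)) ⁻¹' r.2.2.1
  have hwd : FactorsThrough (fun r => CF.M r.2.1.1 r.2.2.1) cylinder := fun r r' h =>
    CF.M_eq_of_preimage_eq r.2.1.2 r'.2.1.2 r.2.2.2 r'.2.2.2 h
  exact ⟨extend cylinder _ 0, fun n t ht S hS => hwd.extend_apply 0 ⟨n, ⟨t, ht⟩, ⟨S, hS⟩⟩⟩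

end ConsistentFamily

theorem exists_common_index_of_mem_cylinderSets {T : Type*} {Λ : T → Type*}
    {F : ∀ t, SetAlgebra (Λ t)} {A B : Set (∀ t, Λ t)} (hA : A ∈ cylinderSets Λ F)
    (hB : B ∈ cylinderSets Λ F) :
    ∃ (N : ℕ) (u : Fin N → T), Injective u ∧
      ∃ A' ∈ prodAlgebra (fun j => F (u j)), ∃ B' ∈ prodAlgebra (fun j => F (u j)),
        A = (fun x j => x (u j)) ⁻¹' A' ∧ B = (fun x j => x (u j)) ⁻¹' B' := by
  obtain ⟨n, t, -, S, hS, rfl⟩ := hA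
  obtain ⟨m, s, -, S', hS', rfl⟩ := hB
  obtain ⟨N, u, hu, ⟨e, rfl⟩, ⟨f, rfl⟩⟩ := exists_injective_tuple_factor t s
  exact ⟨N, u, hu, _, preimage_reindex_mem_prodAlgebra e hS,
    _, preimage_reindex_mem_prodAlgebra f hS', rfl, rfl⟩

theorem consistentFamily_extension_general
    {H : Type*} [NormedAddCommGroup H] [InnerProductSpace ℂ H] [CompleteSpace H]
    {T : Type*} {Λ : T → Type*} [∀ t, Nonempty (Λ t)]
    {F : ∀ t, SetAlgebra (Λ t)} (CF : ConsistentFamily Λ F H) :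
    ∃ 𝕄 : Set (∀ t, Λ t) → (H →L[ℂ] H),
      𝕄 Set.univ = 1 ∧
      (∀ ⦃A B : Set (∀ t, Λ t)⦄, A ∈ cylinderSets Λ F → B ∈ cylinderSets Λ F →
        Disjoint A B → 𝕄 (A ∪ B) = 𝕄 A + 𝕄 B) ∧
      (∀ (n : ℕ) (t : Fin n → T), Function.Injective t →
        ∀ Fs ∈ prodAlgebra (fun j => F (t j)),
          𝕄 ((fun (x : ∀ s, Λ s) (j : Fin n) => x (t j)) ⁻¹' Fs) = CF.M t Fs) ∧
      (∀ 𝕄' : Set (∀ t, Λ t) → (H →L[ℂ] H),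
        𝕄' Set.univ = 1 →
        (∀ ⦃A B : Set (∀ t, Λ t)⦄, A ∈ cylinderSets Λ F → B ∈ cylinderSets Λ F →
          Disjoint A B → 𝕄' (A ∪ B) = 𝕄' A + 𝕄' B) →
        (∀ (n : ℕ) (t : Fin n → T), Function.Injective t →
          ∀ Fs ∈ prodAlgebra (fun j => F (t j)),
            𝕄' ((fun (x : ∀ s, Λ s) (j : Fin n) => x (t j)) ⁻¹' Fs) = CF.M t Fs) →
        ∀ A ∈ cylinderSets Λ F, 𝕄' A = 𝕄 A) := by
  obtain ⟨𝕄, h𝕄⟩ := CF.exists_extension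
  refine ⟨𝕄, ?_, ?_, h𝕄, ?_⟩
  · have h₀ := h𝕄 0 Fin.elim0 (injective_of_subsingleton _) univ GenAlg.univ
    rwa [preimage_univ, CF.normalized _ (injective_of_subsingleton _)] at h₀
  · intro A B hA hB hAB
    obtain ⟨N, u, hu, A', hA', B', hB', rfl, rfl⟩ := exists_common_index_of_mem_cylinderSets hA hB
    rw [← preimage_union, h𝕄 N u hu _ (hA'.union hB'), h𝕄 N u hu _ hA', h𝕄 N u hu _ hB']
    exact CF.additive u hu hA' hB' (hAB.of_preimage (surjective_reindex hu))
  · rintro 𝕄' - - h𝕄' A ⟨n, t, ht, S, hS, rfl⟩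
    rw [h𝕄' n t ht S hS, h𝕄 n t ht S hS]

/-- **extension theorem.** For a consistent family of normalized finitely
additive `L(H)`-valued measures there exists a unique normalized finitely additive
`L(H)`-valued measure `𝕄` on the algebra `A_Λ` of cylinder sets of `Λ = Π_{t∈T} Λ_t`
such that `𝕄(π_{(t₁,…,tₙ)}⁻¹(F)) = M_{(t₁,…,tₙ)}(F)` for all finite tuples of distinct
indices and all `F` in the corresponding product algebra. -/
theorem consistentFamily_extension
    {H : Type*} [NormedAddCommGroup H] [InnerProductSpace ℂ H] [CompleteSpace H]
    {T : Type*} [Nonempty T] {Λ : T → Type*} [∀ t, Nonempty (Λ t)]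
    {F : ∀ t, SetAlgebra (Λ t)} (CF : ConsistentFamily Λ F H) :
    ∃ 𝕄 : Set (∀ t, Λ t) → (H →L[ℂ] H),
      𝕄 Set.univ = 1 ∧
      (∀ ⦃A B : Set (∀ t, Λ t)⦄, A ∈ cylinderSets Λ F → B ∈ cylinderSets Λ F →
        Disjoint A B → 𝕄 (A ∪ B) = 𝕄 A + 𝕄 B) ∧
      (∀ (n : ℕ) (t : Fin n → T), Function.Injective t →
        ∀ Fs ∈ prodAlgebra (fun j => F (t j)),
          𝕄 ((fun (x : ∀ s, Λ s) (j : Fin n) => x (t j)) ⁻¹' Fs) = CF.M t Fs) ∧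
      (∀ 𝕄' : Set (∀ t, Λ t) → (H →L[ℂ] H),
        𝕄' Set.univ = 1 →
        (∀ ⦃A B : Set (∀ t, Λ t)⦄, A ∈ cylinderSets Λ F → B ∈ cylinderSets Λ F →
          Disjoint A B → 𝕄' (A ∪ B) = 𝕄' A + 𝕄' B) →
        (∀ (n : ℕ) (t : Fin n → T), Function.Injective t →
          ∀ Fs ∈ prodAlgebra (fun j => F (t j)),
            𝕄' ((fun (x : ∀ s, Λ s) (j : Fin n) => x (t j)) ⁻¹' Fs) = CF.M t Fs) →
        ∀ A ∈ cylinderSets Λ F, 𝕄' A = 𝕄 A) :=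
  consistentFamily_extension_general CF
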